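/- arXiv:2501.00728 — 3 statements merged into one kernel-verified Lean document; each statement's English description precedes it below -/
import Mathlib

section
/- For any y ∈ (0, 1/e], if there exists x ∈ (0, 1/e] such that x·ln(1/x) = y, then x ≥ y / (2·ln(1/y)). -/
/-! With `L = log (1/x)` one has `log (1/y) = L - log L`, so the claim reduces to the elementary
inequality `2 log L ≤ L`, which is `log (L/2) ≤ L/2 - 1` combined with `log 2 ≤ 1`. -/

open Real

lemma two_mul_log_le_self {t : ℝ} (ht : 0 < t) : 2 * log t ≤ t := by
  have h_half : log (t / 2) ≤ t / 2 - 1 := log_le_sub_one_of_pos (by positivity)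
  have h_two : log 2 ≤ 1 := by linarith [log_le_sub_one_of_pos (zero_lt_two' ℝ)]
  rw [log_div ht.ne' two_ne_zero] at h_half
  linarith

theorem stmt0_general (y : ℝ)
    (x : ℝ) (hx : x ∈ Set.Ioc 0 (1 / Real.exp 1))
    (hxy : x * Real.log (1 / x) = y) :
    y / (2 * Real.log (1 / y)) ≤ x := by
  obtain ⟨hx0, hx_le⟩ := hx
  have hx1 : x < 1 :=
    hx_le.trans_lt (by rw [one_div]; exact inv_lt_one_of_one_lt₀ (one_lt_exp_iff.2 one_pos))
  set L := log (1 / x)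
  have hL : 0 < L := log_pos ((one_lt_div hx0).2 hx1)
  have hlogL := two_mul_log_le_self hL
  have hlogy : log (1 / y) = L - log L := by
    have hLx : L = -log x := by simp only [L, one_div, log_inv]
    rw [← hxy, one_div, log_inv, log_mul hx0.ne' hL.ne']
    linarith
  rw [hlogy, div_le_iff₀ (by linarith), ← hxy]
  nlinarith

theorem stmt0 (y : ℝ) (hy : y ∈ Set.Ioc 0 (1 / Real.exp 1))
    (x : ℝ) (hx : x ∈ Set.Ioc 0 (1 / Real.exp 1))
    (hxy : x * Real.log (1 / x) = y) :
    y / (2 * Real.log (1 / y)) ≤ x :=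
  stmt0_general y x hx hxy
end

section
/- Let X and Y be two independent nonnegative continuous random variables such that there exist constants C₁, C₂, δ₁, δ₂ > 0 with Pr[X ≥ T] ≤ C₁/T + δ₁ and Pr[Y ≥ T] ≤ C₂/T + δ₂ for all T > 0. Then for all T > C₁C₂, Pr[X·Y ≥ T] ≤ 2C₁C₂/T + (C₁C₂/T)·ln(T/(C₁C₂)) + δ₁ + 2δ₂. -/
/-!
Split the event at `Y = b` with `b = T / C₁`. The part `Y ≥ b` costs `C₁C₂/T + δ₂` by the tail
bound of `Y`. On `Y < b`, conditioning on `Y = y` (independence) and the tail bound of `X` give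
`Pr[XY ≥ T, Y < b] ≤ (C₁/T) E[Y; Y < b] + δ₁`, and by the layer-cake formula
`E[Y; Y < b] ≤ ∫₀ᵇ Pr[Y ≥ t] dt ≤ C₂ + ∫_{C₂}^b (C₂/t + δ₂) dt = C₂ + C₂ ln(b/C₂) + δ₂(b - C₂)`.
-/

open MeasureTheory ProbabilityTheory Set ENNReal

section

variable {Ω : Type*} [MeasurableSpace Ω] {μ : Measure Ω} [IsFiniteMeasure μ]

lemma measure_le_ofReal_of_toReal_le {s : Set Ω} {r : ℝ} (h : (μ s).toReal ≤ r) :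
    μ s ≤ ENNReal.ofReal r :=
  (ofReal_toReal (measure_ne_top μ s)).symm.trans_le (ofReal_le_ofReal h)

lemma ProbabilityTheory.IndepFun.measure_preimage_eq_lintegral {α β : Type*} [MeasurableSpace α]
    [MeasurableSpace β] {X : Ω → α} {Y : Ω → β} (hX : Measurable X) (hY : Measurable Y)
    (hXY : IndepFun X Y μ) {s : Set (α × β)} (hs : MeasurableSet s) :
    μ ((fun ω => (X ω, Y ω)) ⁻¹' s) = ∫⁻ y, μ (X ⁻¹' ((fun x => (x, y)) ⁻¹' s)) ∂(μ.map Y) := by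
  rw [← Measure.map_apply (hX.prodMk hY) hs,
    hXY.map_prod_eq_prod_map_map hX.aemeasurable hY.aemeasurable, Measure.prod_apply_symm hs]
  exact lintegral_congr fun y => Measure.map_apply hX (measurable_prodMk_right hs)

lemma ProbabilityTheory.IndepFun.measure_le_mul_and_lt_eq_setLIntegral {X Y : Ω → ℝ}
    (hX : Measurable X) (hY : Measurable Y) (hXY : IndepFun X Y μ) (T b : ℝ) :
    μ {ω | T ≤ X ω * Y ω ∧ Y ω < b} = ∫⁻ y in Iio b, μ {ω | T ≤ X ω * y} ∂(μ.map Y) := by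
  have hs : MeasurableSet {p : ℝ × ℝ | T ≤ p.1 * p.2 ∧ p.2 < b} :=
    (measurableSet_le measurable_const (measurable_fst.mul measurable_snd)).inter
      (measurableSet_lt measurable_snd measurable_const)
  rw [← lintegral_indicator measurableSet_Iio]
  refine (hXY.measure_preimage_eq_lintegral hX hY hs).trans (lintegral_congr fun y => ?_)
  by_cases hy : y < b <;> simp [hy]

lemma measure_le_mul_le_of_tail_le {X : Ω → ℝ} (hXnn : ∀ ω, 0 ≤ X ω) {C δ T : ℝ} (hC : 0 ≤ C)
    (hT : 0 < T) (htail : ∀ t, 0 < t → (μ {ω | t ≤ X ω}).toReal ≤ C / t + δ) (y : ℝ) :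
    μ {ω | T ≤ X ω * y} ≤ ENNReal.ofReal (C / T) * ENNReal.ofReal y + ENNReal.ofReal δ := by
  rcases le_or_gt y 0 with hy | hy
  · have : {ω | T ≤ X ω * y} = ∅ :=
      eq_empty_of_forall_notMem fun ω hω => (mul_nonpos_of_nonneg_of_nonpos (hXnn ω) hy).not_gt
        (hT.trans_le hω)
    simp [this]
  · have hset : {ω | T ≤ X ω * y} = {ω | T / y ≤ X ω} := by
      ext ω; exact (div_le_iff₀ hy).symm
    calc μ {ω | T ≤ X ω * y} ≤ ENNReal.ofReal (C / (T / y) + δ) :=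
          hset ▸ measure_le_ofReal_of_toReal_le (htail _ (div_pos hT hy))
      _ ≤ ENNReal.ofReal (C / T * y) + ENNReal.ofReal δ := by
          rw [div_div_eq_mul_div, mul_div_right_comm]; exact ofReal_add_le
      _ = _ := by rw [ofReal_mul (div_nonneg hC hT.le)]

end

lemma setLIntegral_Iio_ofReal_le (ν : Measure ℝ) (b : ℝ) :
    ∫⁻ y in Iio b, ENNReal.ofReal y ∂ν ≤ ∫⁻ t in Ioo 0 b, ν (Ici t) := by
  calc ∫⁻ y in Iio b, ENNReal.ofReal y ∂ν = ∫⁻ y in Iio b, ENNReal.ofReal (max y 0) ∂ν := by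
        simp_rw [ofReal_max, ofReal_zero, max_zero]
    _ = ∫⁻ t in Ioi 0, ν.restrict (Iio b) {y | t ≤ max y 0} :=
        lintegral_eq_lintegral_meas_le _ (ae_of_all _ fun y => le_max_right y 0) (by fun_prop)
    _ ≤ ∫⁻ t in Ioi 0, (Iio b).indicator (fun t => ν (Ici t)) t := by
        refine setLIntegral_mono' measurableSet_Ioi fun t (ht : 0 < t) => ?_
        have hset : {y | t ≤ max y 0} = Ici t := by
          ext y; simp [ht.not_ge]
        rw [hset, Measure.restrict_apply measurableSet_Ici]
        by_cases htb : t < b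
        · rw [indicator_of_mem (mem_Iio.2 htb)]; exact measure_mono inter_subset_left
        · rw [Ici_inter_Iio, Ico_eq_empty htb, measure_empty]; exact bot_le
    _ = ∫⁻ t in Ioo 0 b, ν (Ici t) := by
        rw [lintegral_indicator measurableSet_Iio, Measure.restrict_restrict measurableSet_Iio,
          Iio_inter_Ioi]

lemma integral_Ioo_div_add_const {C δ b : ℝ} (hC : 0 < C) (hCb : C ≤ b) :
    ∫ t in Ioo C b, (C / t + δ) = C * Real.log (b / C) + δ * (b - C) := by
  have hzero : (0 : ℝ) ∉ uIcc C b := by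
    rw [uIcc_of_le hCb]; exact fun h => hC.not_ge h.1
  have hinv : IntervalIntegrable (fun t : ℝ => C / t) volume C b := by
    simp_rw [div_eq_mul_inv]
    exact (intervalIntegral.intervalIntegrable_inv (fun t ht h => hzero (h ▸ ht))
      continuousOn_id).const_mul C
  rw [← integral_Ioc_eq_integral_Ioo, ← intervalIntegral.integral_of_le hCb,
    intervalIntegral.integral_add hinv intervalIntegrable_const, intervalIntegral.integral_const,
    smul_eq_mul]
  simp_rw [div_eq_mul_inv C]
  rw [intervalIntegral.integral_const_mul, integral_inv hzero]
  ring

lemma setLIntegral_Ioo_le_of_le_min {F : ℝ → ℝ≥0∞} {C δ b : ℝ} (hC : 0 < C) (hCb : C ≤ b)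
    (hδ : 0 ≤ δ) (hF_one : ∀ t, F t ≤ 1) (hF : ∀ t, 0 < t → F t ≤ ENNReal.ofReal (C / t + δ)) :
    ∫⁻ t in Ioo 0 b, F t ≤ ENNReal.ofReal (C + C * Real.log (b / C) + δ * (b - C)) := by
  have hlog : 0 ≤ Real.log (b / C) := Real.log_nonneg ((one_le_div hC).2 hCb)
  have hint : IntegrableOn (fun t => C / t + δ) (Ioo C b) := by
    refine (ContinuousOn.integrableOn_Icc ?_).mono_set Ioo_subset_Icc_self
    exact (continuousOn_const.div continuousOn_id fun t ht => (hC.trans_le ht.1).ne').add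
      continuousOn_const
  calc ∫⁻ t in Ioo 0 b, F t ≤ ∫⁻ t in Ioc 0 C ∪ Ioo C b, F t :=
        lintegral_mono_set Ioo_subset_Ioc_union_Ioo
    _ ≤ (∫⁻ t in Ioc 0 C, F t) + ∫⁻ t in Ioo C b, F t := lintegral_union_le _ _ _
    _ ≤ (∫⁻ t in Ioc 0 C, 1) + ∫⁻ t in Ioo C b, ENNReal.ofReal (C / t + δ) :=
        add_le_add (setLIntegral_mono' measurableSet_Ioc fun t _ => hF_one t)
          (setLIntegral_mono' measurableSet_Ioo fun t ht => hF t (hC.trans ht.1))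
    _ = ENNReal.ofReal C + ENNReal.ofReal (C * Real.log (b / C) + δ * (b - C)) := by
        rw [setLIntegral_one, Real.volume_Ioc, sub_zero, ← integral_Ioo_div_add_const hC hCb,
          ofReal_integral_eq_lintegral_ofReal hint]
        exact (ae_restrict_iff' measurableSet_Ioo).2 (ae_of_all _ fun t ht =>
          add_nonneg (div_nonneg hC.le (hC.trans ht.1).le) hδ)
    _ = _ := by
        rw [← ofReal_add hC.le (by nlinarith), add_assoc]

lemma setLIntegral_Iio_ofReal_le_of_tail_le {ν : Measure ℝ} [IsProbabilityMeasure ν]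
    {C δ b : ℝ} (hC : 0 < C) (hCb : C ≤ b) (hδ : 0 ≤ δ)
    (htail : ∀ t, 0 < t → ν (Ici t) ≤ ENNReal.ofReal (C / t + δ)) :
    ∫⁻ y in Iio b, ENNReal.ofReal y ∂ν ≤
      ENNReal.ofReal (C + C * Real.log (b / C) + δ * (b - C)) :=
  (setLIntegral_Iio_ofReal_le ν b).trans
    (setLIntegral_Ioo_le_of_le_min hC hCb hδ (fun _ => prob_le_one) htail)

lemma measure_le_mul_and_lt_le_of_tail_le {Ω : Type*} [MeasurableSpace Ω] {μ : Measure Ω}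
    [IsProbabilityMeasure μ] {X Y : Ω → ℝ} (hX : Measurable X) (hY : Measurable Y)
    (hXY : IndepFun X Y μ) (hXnn : ∀ ω, 0 ≤ X ω) {C₁ C₂ δ₁ δ₂ T b : ℝ} (hC₁ : 0 ≤ C₁)
    (hC₂ : 0 < C₂) (hδ₂ : 0 ≤ δ₂) (hT : 0 < T) (hCb : C₂ ≤ b)
    (htailX : ∀ t, 0 < t → (μ {ω | t ≤ X ω}).toReal ≤ C₁ / t + δ₁)
    (htailY : ∀ t, 0 < t → (μ {ω | t ≤ Y ω}).toReal ≤ C₂ / t + δ₂) :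
    μ {ω | T ≤ X ω * Y ω ∧ Y ω < b} ≤ ENNReal.ofReal (C₁ / T) *
      ENNReal.ofReal (C₂ + C₂ * Real.log (b / C₂) + δ₂ * (b - C₂)) + ENNReal.ofReal δ₁ := by
  have : IsProbabilityMeasure (μ.map Y) := Measure.isProbabilityMeasure_map hY.aemeasurable
  have hYtail (t : ℝ) (ht : 0 < t) : μ.map Y (Ici t) ≤ ENNReal.ofReal (C₂ / t + δ₂) := by
    rw [Measure.map_apply hY measurableSet_Ici]; exact measure_le_ofReal_of_toReal_le (htailY t ht)
  calc μ {ω | T ≤ X ω * Y ω ∧ Y ω < b}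
      ≤ ∫⁻ y in Iio b,
          (ENNReal.ofReal (C₁ / T) * ENNReal.ofReal y + ENNReal.ofReal δ₁) ∂μ.map Y := by
        rw [hXY.measure_le_mul_and_lt_eq_setLIntegral hX hY]
        exact setLIntegral_mono' measurableSet_Iio fun y _ =>
          measure_le_mul_le_of_tail_le hXnn hC₁ hT htailX y
    _ ≤ _ := by
        rw [lintegral_add_right _ measurable_const, lintegral_const_mul _ measurable_ofReal,
          setLIntegral_const]
        gcongr
        · exact setLIntegral_Iio_ofReal_le_of_tail_le hC₂ hCb hδ₂ hYtail
        · exact mul_le_of_le_one_right' prob_le_one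

theorem stmt3_general {Ω : Type*} [MeasurableSpace Ω] (μ : Measure Ω) [IsProbabilityMeasure μ]
    (X Y : Ω → ℝ) (hX : Measurable X) (hY : Measurable Y)
    (hindep : IndepFun X Y μ)
    (hXnn : ∀ ω, 0 ≤ X ω)
    (C₁ C₂ δ₁ δ₂ : ℝ) (hC₁ : 0 < C₁) (hC₂ : 0 < C₂) (hδ₁ : 0 < δ₁) (hδ₂ : 0 < δ₂)
    (htailX : ∀ T : ℝ, 0 < T → (μ {ω | T ≤ X ω}).toReal ≤ C₁ / T + δ₁)
    (htailY : ∀ T : ℝ, 0 < T → (μ {ω | T ≤ Y ω}).toReal ≤ C₂ / T + δ₂)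
    (T : ℝ) (hT : C₁ * C₂ < T) :
    (μ {ω | T ≤ X ω * Y ω}).toReal ≤
      2 * C₁ * C₂ / T + C₁ * C₂ / T * Real.log (T / (C₁ * C₂)) + δ₁ + 2 * δ₂ := by
  have hT0 : 0 < T := (mul_pos hC₁ hC₂).trans hT
  set b := T / C₁ with hb
  have hCb : C₂ ≤ b := (le_div_iff₀' hC₁).2 hT.le
  have hcover : {ω | T ≤ X ω * Y ω} ⊆ {ω | b ≤ Y ω} ∪ {ω | T ≤ X ω * Y ω ∧ Y ω < b} :=
    fun ω hω => (le_or_gt b (Y ω)).imp id fun h => ⟨hω, h⟩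
  have hbound := (measure_mono hcover).trans ((measure_union_le _ _).trans
    (add_le_add (measure_le_ofReal_of_toReal_le (htailY b (div_pos hT0 hC₁)))
      (measure_le_mul_and_lt_le_of_tail_le hX hY hindep hXnn hC₁.le hC₂ hδ₂.le hT0 hCb
        htailX htailY)))
  have hL : b / C₂ = T / (C₁ * C₂) := div_div _ _ _
  have hlog : 0 ≤ Real.log (T / (C₁ * C₂)) := hL ▸ Real.log_nonneg ((one_le_div hC₂).2 hCb)
  rw [hL, ← ofReal_mul (by positivity), ← ofReal_add (by positivity) (by positivity),
    ← ofReal_add (by positivity) (by positivity)] at hbound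
  refine toReal_le_of_le_ofReal (by positivity) (hbound.trans (ofReal_le_ofReal ?_))
  have ha : 0 ≤ C₁ * C₂ / T := by positivity
  have hsum : C₂ / b + δ₂ + (C₁ / T * (C₂ + C₂ * Real.log (T / (C₁ * C₂)) + δ₂ * (b - C₂)) + δ₁)
      = 2 * C₁ * C₂ / T + C₁ * C₂ / T * Real.log (T / (C₁ * C₂)) + δ₁ + 2 * δ₂
        - δ₂ * (C₁ * C₂ / T) := by
    rw [hb]; field_simp; ring
  linarith [mul_nonneg hδ₂.le ha]

theorem stmt3 {Ω : Type*} [MeasurableSpace Ω] (μ : Measure Ω) [IsProbabilityMeasure μ]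
    (X Y : Ω → ℝ) (hX : Measurable X) (hY : Measurable Y)
    (hindep : IndepFun X Y μ)
    (hXnn : ∀ ω, 0 ≤ X ω) (hYnn : ∀ ω, 0 ≤ Y ω)
    (hXcont : μ.map X ≪ volume) (hYcont : μ.map Y ≪ volume)
    (C₁ C₂ δ₁ δ₂ : ℝ) (hC₁ : 0 < C₁) (hC₂ : 0 < C₂) (hδ₁ : 0 < δ₁) (hδ₂ : 0 < δ₂)
    (htailX : ∀ T : ℝ, 0 < T → (μ {ω | T ≤ X ω}).toReal ≤ C₁ / T + δ₁)
    (htailY : ∀ T : ℝ, 0 < T → (μ {ω | T ≤ Y ω}).toReal ≤ C₂ / T + δ₂)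
    (T : ℝ) (hT : C₁ * C₂ < T) :
    (μ {ω | T ≤ X ω * Y ω}).toReal ≤
      2 * C₁ * C₂ / T + C₁ * C₂ / T * Real.log (T / (C₁ * C₂)) + δ₁ + 2 * δ₂ :=
  stmt3_general μ X Y hX hY hindep hXnn C₁ C₂ δ₁ δ₂ hC₁ hC₂ hδ₁ hδ₂ htailX htailY T hT
end

section
/- Let X and Y be two independent nonnegative continuous random variables such that there exist constants C₁, C₂, δ₁, δ₂ > 0 with Pr[X ≥ T] ≤ C₁/T + δ₁ and Pr[Y ≥ T] ≤ C₂/T + δ₂ for all T > 0. Then for any δ ∈ (0,1], Pr[X·Y ≥ 6·C₁·C₂·ln(3/δ)/δ] ≤ δ + δ₁ + 2δ₂. -/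
/-!
Cut the range of `Y` into the dyadic bands `c (k+1) ≤ Y < c k` (`k < K`) and `Y < c K`, where
`c k = 3 C₂ / (δ 2^k)`. On a band, `M ≤ X Y` forces `X ≥ M / c k`, so by independence the band
contributes at most `P(X ≥ M / c k) P(Y in band)`, and `P(X ≥ M / c k) ≤ 2^{-k} / (2L) + δ₁` with
`L = ln (3 / δ)`. The `δ₁` parts add up to at most `δ₁`; summing the rest by parts leaves
`2^{-K} / (2L) + ∑_{k<K} 2^{-k} P(Y ≥ c (k+1)) / (4L)`, each term of the sum being at most `δ / (6L)`
plus a geometric share of `δ₂ / (2L)`. For `K = ⌈2L⌉` we have `2^K ≥ 3 / δ` and `K + 1 ≤ 4L`, which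
together with `P(Y ≥ c 0) ≤ δ / 3 + δ₂` gives `δ + δ₁ + 2 δ₂`.
-/

open MeasureTheory ProbabilityTheory Set

lemma sum_mul_sub_add_mul_le {A α q : ℕ → ℝ} {ε : ℝ} (hA : ∀ k, A k ≤ α k + ε) (hα0 : 0 ≤ α 0)
    (hε : 0 ≤ ε) (hq : Monotone q) (hq0 : 0 ≤ q 0) (hq1 : ∀ k, q k ≤ 1) (K : ℕ) :
    ∑ k ∈ Finset.range K, A k * (q (k + 1) - q k) + A K * (1 - q K)
      ≤ ε + α K + ∑ k ∈ Finset.range K, (α k - α (k + 1)) * q (k + 1) := by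
  have abel : ∀ K, ∑ k ∈ Finset.range K, (α k + ε) * (q (k + 1) - q k) + (α K + ε) * (1 - q K)
      = ε * (1 - q 0) + α K - α 0 * q 0 + ∑ k ∈ Finset.range K, (α k - α (k + 1)) * q (k + 1) := by
    intro K
    induction K with
    | zero => simp; ring
    | succ K ih => rw [Finset.sum_range_succ, Finset.sum_range_succ]; linear_combination ih
  calc _ ≤ ∑ k ∈ Finset.range K, (α k + ε) * (q (k + 1) - q k) + (α K + ε) * (1 - q K) := by
        gcongr with k hk
        · exact sub_nonneg.2 (hq k.le_succ)
        · exact hA k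
        · exact sub_nonneg.2 (hq1 K)
        · exact hA K
    _ ≤ _ := by rw [abel]; nlinarith [mul_nonneg hα0 hq0, mul_nonneg hε hq0]

lemma sum_sub_div_two_pow_mul_le {q : ℕ → ℝ} {β γ ε : ℝ} (hγ : 0 ≤ γ) (hε : 0 ≤ ε)
    (hq : ∀ k, q k ≤ β * 2 ^ k + ε) (K : ℕ) :
    ∑ k ∈ Finset.range K, (γ / 2 ^ k - γ / 2 ^ (k + 1)) * q (k + 1) ≤ K * β * γ + γ * ε := by
  have hhalf : ∑ k ∈ Finset.range K, (1 / 2 : ℝ) ^ (k + 1) ≤ 1 := by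
    simp only [pow_succ, ← Finset.sum_mul]
    linarith [sum_geometric_two_le K]
  calc ∑ k ∈ Finset.range K, (γ / 2 ^ k - γ / 2 ^ (k + 1)) * q (k + 1)
      ≤ ∑ k ∈ Finset.range K, (β * γ + γ * ε * (1 / 2) ^ (k + 1)) := by
        refine Finset.sum_le_sum fun k _ => ?_
        calc (γ / 2 ^ k - γ / 2 ^ (k + 1)) * q (k + 1)
            ≤ γ / 2 ^ (k + 1) * (β * 2 ^ (k + 1) + ε) := by
              rw [show γ / 2 ^ k - γ / 2 ^ (k + 1) = γ / 2 ^ (k + 1) by ring]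
              exact mul_le_mul_of_nonneg_left (hq _) (by positivity)
          _ = β * γ + γ * ε * (1 / 2) ^ (k + 1) := by rw [one_div_pow]; field_simp
    _ = K * β * γ + γ * ε * ∑ k ∈ Finset.range K, (1 / 2 : ℝ) ^ (k + 1) := by
        rw [Finset.sum_add_distrib, Finset.sum_const, Finset.card_range, Finset.mul_sum,
          nsmul_eq_mul, mul_assoc]
    _ ≤ K * β * γ + γ * ε := by
        linarith [mul_le_mul_of_nonneg_left hhalf (by positivity : 0 ≤ γ * ε)]

namespace ProbabilityTheory.IndepFun

variable {Ω : Type*} [MeasurableSpace Ω] {μ : Measure Ω} {X Y : Ω → ℝ} {M : ℝ}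

lemma measureReal_le_mul_and_mem_le_mul [IsFiniteMeasure μ] (hindep : IndepFun X Y μ)
    (hXnn : ∀ ω, 0 ≤ X ω) {c : ℝ} (hc : 0 < c) {s : Set ℝ} (hs : MeasurableSet s)
    (hsc : s ⊆ Iio c) :
    μ.real {ω | M ≤ X ω * Y ω ∧ Y ω ∈ s} ≤ μ.real {ω | M / c ≤ X ω} * μ.real (Y ⁻¹' s) :=
  calc μ.real {ω | M ≤ X ω * Y ω ∧ Y ω ∈ s} ≤ μ.real (X ⁻¹' Ici (M / c) ∩ Y ⁻¹' s) := by
        refine measureReal_mono fun ω ⟨hM, hYs⟩ => ⟨?_, hYs⟩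
        rw [mem_preimage, mem_Ici, div_le_iff₀ hc]
        exact hM.trans (mul_le_mul_of_nonneg_left (hsc hYs).le (hXnn ω))
    _ = μ.real {ω | M / c ≤ X ω} * μ.real (Y ⁻¹' s) := by
        simp only [measureReal_def, hindep.measure_inter_preimage_eq_mul _ _ measurableSet_Ici hs,
          ENNReal.toReal_mul]
        rfl

lemma measureReal_le_mul_le_add_sum_bands [IsFiniteMeasure μ] (hindep : IndepFun X Y μ)
    (hXnn : ∀ ω, 0 ≤ X ω) {c : ℕ → ℝ} (hc : ∀ k, 0 < c k) (K : ℕ) :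
    μ.real {ω | M ≤ X ω * Y ω} ≤ μ.real {ω | c 0 ≤ Y ω}
      + ∑ k ∈ Finset.range K, μ.real {ω | M / c k ≤ X ω} * μ.real (Y ⁻¹' Ico (c (k + 1)) (c k))
      + μ.real {ω | M / c K ≤ X ω} * μ.real (Y ⁻¹' Iio (c K)) := by
  have hbands : ∀ K, μ.real {ω | M ≤ X ω * Y ω ∧ Y ω ∈ Iio (c 0)} ≤
      ∑ k ∈ Finset.range K, μ.real {ω | M / c k ≤ X ω} * μ.real (Y ⁻¹' Ico (c (k + 1)) (c k))
        + μ.real {ω | M ≤ X ω * Y ω ∧ Y ω ∈ Iio (c K)} := by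
    intro K
    induction K with
    | zero => simp
    | succ K ih =>
      have hsplit : {ω | M ≤ X ω * Y ω ∧ Y ω ∈ Iio (c K)} ⊆
          {ω | M ≤ X ω * Y ω ∧ Y ω ∈ Ico (c (K + 1)) (c K)} ∪
            {ω | M ≤ X ω * Y ω ∧ Y ω ∈ Iio (c (K + 1))} := by
        rintro ω ⟨hM, hYK⟩
        by_cases h : c (K + 1) ≤ Y ω
        · exact Or.inl ⟨hM, h, hYK⟩
        · exact Or.inr ⟨hM, not_le.1 h⟩
      rw [Finset.sum_range_succ]
      linarith [measureReal_mono (μ := μ) hsplit, measureReal_union_le (μ := μ)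
        {ω | M ≤ X ω * Y ω ∧ Y ω ∈ Ico (c (K + 1)) (c K)}
        {ω | M ≤ X ω * Y ω ∧ Y ω ∈ Iio (c (K + 1))},
        hindep.measureReal_le_mul_and_mem_le_mul (M := M) (s := Ico (c (K + 1)) (c K)) hXnn
          (hc K) measurableSet_Ico Ico_subset_Iio_self]
  have hsplit : {ω | M ≤ X ω * Y ω} ⊆
      {ω | c 0 ≤ Y ω} ∪ {ω | M ≤ X ω * Y ω ∧ Y ω ∈ Iio (c 0)} := by
    intro ω hM
    by_cases h : c 0 ≤ Y ω
    · exact Or.inl h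
    · exact Or.inr ⟨hM, not_le.1 h⟩
  linarith [measureReal_mono (μ := μ) hsplit, measureReal_union_le (μ := μ) {ω | c 0 ≤ Y ω}
    {ω | M ≤ X ω * Y ω ∧ Y ω ∈ Iio (c 0)}, hbands K,
    hindep.measureReal_le_mul_and_mem_le_mul (M := M) hXnn (hc K) measurableSet_Iio subset_rfl]

theorem measureReal_le_mul_le_of_tail_le [IsProbabilityMeasure μ] (hindep : IndepFun X Y μ)
    (hY : Measurable Y) (hXnn : ∀ ω, 0 ≤ X ω) {C₁ C₂ δ₁ δ₂ : ℝ} (hC₁ : 0 ≤ C₁)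
    (hC₂ : 0 < C₂) (hδ₁ : 0 ≤ δ₁) (hδ₂ : 0 ≤ δ₂)
    (htailX : ∀ T, 0 < T → μ.real {ω | T ≤ X ω} ≤ C₁ / T + δ₁)
    (htailY : ∀ T, 0 < T → μ.real {ω | T ≤ Y ω} ≤ C₂ / T + δ₂)
    (hM : 0 < M) {β : ℝ} (hβ : 0 < β) (K : ℕ) :
    μ.real {ω | M ≤ X ω * Y ω} ≤
      δ₁ + δ₂ + β + C₁ * C₂ / (M * β) * (1 / 2 ^ K + K * β + δ₂) := by
  set γ := C₁ * C₂ / (M * β)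
  set c : ℕ → ℝ := fun k => C₂ / (β * 2 ^ k)
  set q : ℕ → ℝ := fun k => μ.real {ω | c k ≤ Y ω}
  have hc_pos : ∀ k, 0 < c k := fun k => by positivity
  have hc_anti : ∀ k, c (k + 1) ≤ c k := fun k => by
    simp only [c]; gcongr; exacts [by norm_num, k.le_succ]
  have hq_tail : ∀ k, q k ≤ β * 2 ^ k + δ₂ := fun k => by
    have : C₂ / c k = β * 2 ^ k := by simp only [c]; field_simp
    simpa [this] using htailY (c k) (hc_pos k)
  have hX_tail : ∀ k, μ.real {ω | M / c k ≤ X ω} ≤ γ / 2 ^ k + δ₁ := fun k => by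
    have : C₁ / (M / c k) = γ / 2 ^ k := by simp only [c, γ]; field_simp
    simpa [this] using htailX (M / c k) (div_pos hM (hc_pos k))
  have hq_mono : Monotone q := monotone_nat_of_le_succ fun k =>
    measureReal_mono fun ω (h : c k ≤ Y ω) => (hc_anti k).trans h
  have hband : ∀ k, μ.real (Y ⁻¹' Ico (c (k + 1)) (c k)) = q (k + 1) - q k := fun k => by
    rw [← Ici_sdiff_Ici, preimage_sdiff, measureReal_sdiff
      (preimage_mono (Ici_subset_Ici.2 (hc_anti k))) (hY measurableSet_Ici)]
    rfl
  have hlow : μ.real (Y ⁻¹' Iio (c K)) = 1 - q K := by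
    rw [← compl_Ici, preimage_compl, probReal_compl_eq_one_sub (hY measurableSet_Ici)]
    rfl
  have habel := sum_mul_sub_add_mul_le (A := fun k => μ.real {ω | M / c k ≤ X ω})
    (α := fun k => γ / 2 ^ k) hX_tail (by positivity) hδ₁ hq_mono measureReal_nonneg
    (fun _ => measureReal_le_one) K
  have hbands := hindep.measureReal_le_mul_le_add_sum_bands (M := M) hXnn hc_pos K
  simp only [hband, hlow] at hbands
  have hγK : γ / 2 ^ K = γ * (1 / 2 ^ K) := by ring
  have hgeom := sum_sub_div_two_pow_mul_le (γ := γ) (by positivity) hδ₂ hq_tail K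
  linarith [hq_tail 0, pow_zero (2 : ℝ)]

end ProbabilityTheory.IndepFun

theorem stmt4_general {Ω : Type*} [MeasurableSpace Ω] (μ : Measure Ω) [IsProbabilityMeasure μ]
    (X Y : Ω → ℝ) (hY : Measurable Y)
    (hindep : IndepFun X Y μ)
    (hXnn : ∀ ω, 0 ≤ X ω)
    (C₁ C₂ δ₁ δ₂ : ℝ) (hC₁ : 0 < C₁) (hC₂ : 0 < C₂) (hδ₁ : 0 < δ₁) (hδ₂ : 0 < δ₂)
    (htailX : ∀ T : ℝ, 0 < T → (μ {ω | T ≤ X ω}).toReal ≤ C₁ / T + δ₁)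
    (htailY : ∀ T : ℝ, 0 < T → (μ {ω | T ≤ Y ω}).toReal ≤ C₂ / T + δ₂)
    (δ : ℝ) (hδ : δ ∈ Set.Ioc (0 : ℝ) 1) :
    (μ {ω | 6 * C₁ * C₂ * Real.log (3 / δ) / δ ≤ X ω * Y ω}).toReal ≤ δ + δ₁ + 2 * δ₂ := by
  obtain ⟨hδ0, hδ1⟩ := hδ
  set L := Real.log (3 / δ)
  have hL : 1 ≤ L := (Real.le_log_iff_exp_le (by positivity)).2 <|
    Real.exp_one_lt_d9.le.trans <| by linarith [le_div_self (by norm_num : (0 : ℝ) ≤ 3) hδ0 hδ1]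
  set K := ⌈2 * L⌉₊
  have hK : (K : ℝ) + 1 ≤ 4 * L := by
    linarith [Nat.ceil_lt_add_one (by positivity : 0 ≤ 2 * L)]
  have h2K : 1 / 2 ^ K ≤ δ / 3 := by
    have : 3 / δ ≤ 2 ^ K := calc
      3 / δ = Real.exp L := (Real.exp_log (by positivity)).symm
      _ ≤ Real.exp (K * Real.log 2) :=
        Real.exp_le_exp.2 (by nlinarith [Nat.le_ceil (2 * L), Real.log_two_gt_d9])
      _ = 2 ^ K := by rw [Real.exp_nat_mul, Real.exp_log two_pos]
    rw [div_le_iff₀ hδ0] at this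
    rw [div_le_div_iff₀ (by positivity) (by norm_num)]
    linarith
  have hbound := hindep.measureReal_le_mul_le_of_tail_le hY hXnn hC₁.le hC₂ hδ₁.le hδ₂.le htailX
    htailY (M := 6 * C₁ * C₂ * L / δ) (by positivity) (β := δ / 3) (by positivity) K
  rw [show C₁ * C₂ / (6 * C₁ * C₂ * L / δ * (δ / 3)) = 1 / (2 * L) by field_simp; ring]
    at hbound
  have hrest : 1 / (2 * L) * (1 / 2 ^ K + K * (δ / 3) + δ₂) ≤ 2 * δ / 3 + δ₂ := by
    rw [div_mul_eq_mul_div, one_mul, div_le_iff₀ (by positivity)]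
    nlinarith [mul_le_mul_of_nonneg_right hK hδ0.le, mul_le_mul_of_nonneg_right hL hδ₂.le]
  exact hbound.trans (by linarith)

theorem stmt4 {Ω : Type*} [MeasurableSpace Ω] (μ : Measure Ω) [IsProbabilityMeasure μ]
    (X Y : Ω → ℝ) (hX : Measurable X) (hY : Measurable Y)
    (hindep : IndepFun X Y μ)
    (hXnn : ∀ ω, 0 ≤ X ω) (hYnn : ∀ ω, 0 ≤ Y ω)
    (hXcont : μ.map X ≪ volume) (hYcont : μ.map Y ≪ volume)
    (C₁ C₂ δ₁ δ₂ : ℝ) (hC₁ : 0 < C₁) (hC₂ : 0 < C₂) (hδ₁ : 0 < δ₁) (hδ₂ : 0 < δ₂)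
    (htailX : ∀ T : ℝ, 0 < T → (μ {ω | T ≤ X ω}).toReal ≤ C₁ / T + δ₁)
    (htailY : ∀ T : ℝ, 0 < T → (μ {ω | T ≤ Y ω}).toReal ≤ C₂ / T + δ₂)
    (δ : ℝ) (hδ : δ ∈ Set.Ioc (0 : ℝ) 1) :
    (μ {ω | 6 * C₁ * C₂ * Real.log (3 / δ) / δ ≤ X ω * Y ω}).toReal ≤ δ + δ₁ + 2 * δ₂ :=
  stmt4_general μ X Y hY hindep hXnn C₁ C₂ δ₁ δ₂ hC₁ hC₂ hδ₁ hδ₂ htailX htailY δ hδ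
end
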